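/- Let Y^1, Y^2 be independent simple random walks on ℤ started at 0. There is a constant C (depending on β, K but not N, x, y) such that for all x, y ∈ ℤ and N, E[(1 + β^2 N^{-1/2})^{#{1 ≤ i ≤ ⌊KN⌋: Y^1_i = Y^2_i}} ; Y^1_{⌊KN⌋} = x, Y^2_{⌊KN⌋} = y] ≤ C (KN)^{-1/2} min(P(Y_{⌊KN⌋} = x), P(Y_{⌊KN⌋} = y)). -/

import Mathlib

/-!
Expanding `(1 + σ) ^ #collisions = ∑_{A ⊆ collision times} σ ^ #A` writes the moment as a sum
over sets `A` of times of `σ ^ #A` times the probability that the walks meet at every time of `A`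
(and end at `x`, `y`). If `i < j` are consecutive times of `{0} ∪ A`, then, given both walks up to
time `i`, the first walk has to realise a prescribed displacement in its next `j - i` steps, which
costs at most `1 / √(j - i + 1)` since `C(n, ⌊n/2⌋) ≤ 2 ^ n / √(n + 1)`; the constraint `Y¹_m = x`
is one more such step, at time `m + 1`. The second walk is never conditioned, so `P(Y_m = y)` factors out, and
the weights `E_j` of the sets with largest time `j` satisfy the renewal inequality
`E_j ≤ σ (P(Y_m = y) / √(j + 1) + ∑_{0<i<j} E_i / √(j - i + 1))`. The exponential tilt
`E_j ≤ 2σ e^{θj} / √j · P(Y_m = y)` with `θ = (16σ)²` is preserved by this inequality, because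
`∑_{0<i<j} e^{θi} / √(i (j - i)) ≤ 8 e^{θj} / √(θ j)`. For `σ = β² / √N` and `m = ⌊KN⌋` the tilt
`θ (m + 1) ≤ 256 β⁴ (K + 1)` stays bounded, which leaves the factor `1 / √(m + 1) ≤ (KN)^{-1/2}`;
exchanging the walks gives the minimum.
-/

/-- Position after `i` steps of the walk whose step signs are given by `ε`. -/
def walkOf {m : ℕ} (ε : Fin m → Bool) (i : ℕ) : ℤ :=
  ∑ j ∈ Finset.univ.filter (fun j : Fin m => (j : ℕ) < i), (if ε j then 1 else -1)

/-- Number of collisions of two walks in time window {1, …, m}. -/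
def collisions (m : ℕ) (ε η : Fin m → Bool) : ℕ :=
  ((Finset.Icc 1 m).filter (fun i => walkOf ε i = walkOf η i)).card

/-- P(Y_m = x) for a simple random walk Y on ℤ started at 0. -/
noncomputable def srwProb (m : ℕ) (x : ℤ) : ℝ :=
  ((Finset.univ.filter (fun ε : Fin m → Bool => walkOf ε m = x)).card : ℝ) / 2 ^ m

open Finset Real

lemma walkOf_eq_sum_ite {m : ℕ} (ε : Fin m → Bool) (i : ℕ) :
    walkOf ε i = ∑ t : Fin m, if (t : ℕ) < i then (if ε t then 1 else -1) else 0 := by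
  rw [walkOf, sum_filter]

lemma walkOf_zero {m : ℕ} (ε : Fin m → Bool) : walkOf ε 0 = 0 := by
  simp [walkOf_eq_sum_ite]

lemma walkOf_of_length_le {m i : ℕ} (ε : Fin m → Bool) (h : m ≤ i) : walkOf ε i = walkOf ε m := by
  simp only [walkOf_eq_sum_ite]
  refine sum_congr rfl fun t _ => ?_
  simp [t.isLt, lt_of_lt_of_le t.isLt h]

lemma walkOf_append {j k : ℕ} (ε₁ : Fin j → Bool) (ε₂ : Fin k → Bool) (i : ℕ) :
    walkOf (Fin.append ε₁ ε₂) i = walkOf ε₁ i + walkOf ε₂ (i - j) := by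
  simp only [walkOf_eq_sum_ite, Fin.sum_univ_add, Fin.append_left, Fin.append_right,
    Fin.val_castAdd, Fin.val_natAdd]
  congr 1
  refine sum_congr rfl fun t _ => ?_
  congr 1
  exact propext (by omega)

lemma sum_fin_append {M : Type*} [AddCommMonoid M] {j k : ℕ} (F : (Fin (j + k) → Bool) → M) :
    ∑ ε, F ε = ∑ ε₁ : Fin j → Bool, ∑ ε₂ : Fin k → Bool, F (Fin.append ε₁ ε₂) := by
  rw [← Fintype.sum_prod_type']
  exact (Fintype.sum_equiv (Fin.appendEquiv j k) _ _ fun _ => rfl).symm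

lemma walkOf_length_eq {n : ℕ} (ε : Fin n → Bool) :
    walkOf ε n = 2 * (#{t | ε t} : ℤ) - n := by
  rw [walkOf, filter_true_of_mem fun t _ => t.isLt, natCast_card_filter, mul_sum]
  rw [show (n : ℤ) = ∑ _t : Fin n, 1 by simp, ← sum_sub_distrib]
  refine sum_congr rfl fun t _ => ?_
  cases ε t <;> norm_num

lemma card_walkOf_length_eq_le_choose (n : ℕ) (z : ℤ) :
    #{ε : Fin n → Bool | walkOf ε n = z} ≤ n.choose (n / 2) := by
  obtain h | ⟨ε₀, hε₀⟩ :=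
    (filter (fun ε : Fin n → Bool => walkOf ε n = z) univ).eq_empty_or_nonempty
  · simp [h]
  calc #{ε : Fin n → Bool | walkOf ε n = z}
      ≤ #(powersetCard #{t | ε₀ t} (univ : Finset (Fin n))) := by
        refine card_le_card_of_injOn (fun ε => ({t | ε t} : Finset (Fin n))) (fun ε hε => ?_)
          (fun a _ b _ hab => ?_)
        · simp only [coe_filter, mem_filter, mem_univ, true_and, Set.mem_ofPred_eq] at hε hε₀
          rw [mem_coe, mem_powersetCard]
          refine ⟨subset_univ _, ?_⟩
          have h₁ := walkOf_length_eq ε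
          have h₂ := walkOf_length_eq ε₀
          change #{t | ε t} = #{t | ε₀ t}
          omega
        · funext t
          simpa using congrArg (t ∈ ·) hab
    _ = n.choose #{t | ε₀ t} := by simp
    _ ≤ n.choose (n / 2) := Nat.choose_le_middle _ n

lemma centralBinom_sq_mul_le (t : ℕ) : t.centralBinom ^ 2 * (2 * t + 1) ≤ 16 ^ t := by
  induction t with
  | zero => simp
  | succ t ih =>
    have hrec := Nat.succ_mul_centralBinom_succ t
    have hquad : (2 * t + 1) * (2 * t + 3) ≤ 4 * (t + 1) ^ 2 := by ring_nf; omega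
    have key : (t + 1) ^ 2 * ((t + 1).centralBinom ^ 2 * (2 * (t + 1) + 1))
        ≤ (t + 1) ^ 2 * 16 ^ (t + 1) := by
      calc (t + 1) ^ 2 * ((t + 1).centralBinom ^ 2 * (2 * (t + 1) + 1))
          = 4 * (2 * t + 1) * t.centralBinom ^ 2 * ((2 * t + 1) * (2 * t + 3)) := by
            rw [← mul_assoc, ← mul_pow, hrec]; ring
        _ ≤ 4 * (2 * t + 1) * t.centralBinom ^ 2 * (4 * (t + 1) ^ 2) := by gcongr
        _ = 16 * (t + 1) ^ 2 * (t.centralBinom ^ 2 * (2 * t + 1)) := by ring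
        _ ≤ 16 * (t + 1) ^ 2 * 16 ^ t := by gcongr
        _ = (t + 1) ^ 2 * 16 ^ (t + 1) := by ring
    exact Nat.le_of_mul_le_mul_left key (by positivity)

lemma choose_half_sq_mul_le (n : ℕ) : n.choose (n / 2) ^ 2 * (n + 1) ≤ 4 ^ n := by
  obtain ⟨t, rfl | rfl⟩ := Nat.even_or_odd' n
  · have := centralBinom_sq_mul_le t
    rw [Nat.centralBinom] at this
    rw [show 2 * t / 2 = t by omega, pow_mul]
    simpa using this
  · have hsplit : (2 * (t + 1)).choose (t + 1) = 2 * (2 * t + 1).choose t := by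
      rw [show 2 * (t + 1) = (2 * t + 1) + 1 by ring, Nat.choose_succ_succ,
        ← Nat.choose_symm_half]
      ring
    have := centralBinom_sq_mul_le (t + 1)
    rw [Nat.centralBinom, hsplit] at this
    rw [show (2 * t + 1) / 2 = t by omega]
    refine Nat.le_of_mul_le_mul_right ?_ (show 0 < 4 by norm_num)
    calc (2 * t + 1).choose t ^ 2 * (2 * t + 1 + 1) * 4
        ≤ (2 * (2 * t + 1).choose t) ^ 2 * (2 * (t + 1) + 1) := by nlinarith
      _ ≤ 16 ^ (t + 1) := this
      _ = 4 ^ (2 * t + 1) * 4 := by rw [show 16 = 4 ^ 2 by norm_num, ← pow_mul]; ring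

lemma card_walkOf_length_eq_le (n : ℕ) (z : ℤ) :
    (#{ε : Fin n → Bool | walkOf ε n = z} : ℝ) ≤ 2 ^ n / √(n + 1) := by
  rw [le_div_iff₀ (by positivity)]
  refine le_of_pow_le_pow_left₀ two_ne_zero (by positivity) ?_
  rw [mul_pow, sq_sqrt (by positivity), ← pow_mul, mul_comm n, pow_mul]
  calc (#{ε : Fin n → Bool | walkOf ε n = z} : ℝ) ^ 2 * (n + 1)
      ≤ (n.choose (n / 2) : ℝ) ^ 2 * (n + 1) := by
        gcongr; exact_mod_cast card_walkOf_length_eq_le_choose n z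
    _ ≤ 4 ^ n := by exact_mod_cast choose_half_sq_mul_le n
    _ = (2 ^ 2) ^ n := by norm_num

lemma card_walkOf_eq_le {n l : ℕ} (hnl : n ≤ l) (z : ℤ) :
    (#{ε : Fin l → Bool | walkOf ε n = z} : ℝ) ≤ 2 ^ l / √(n + 1) := by
  obtain ⟨r, rfl⟩ := Nat.exists_eq_add_of_le hnl
  have hsplit : (#{ε : Fin (n + r) → Bool | walkOf ε n = z} : ℝ)
      = #{ε : Fin n → Bool | walkOf ε n = z} * 2 ^ r := by
    simp only [natCast_card_filter, sum_fin_append, walkOf_append, Nat.sub_self, walkOf_zero,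
      add_zero, sum_const, card_univ, Fintype.card_fun, Fintype.card_bool, sum_mul]
    simp
  rw [hsplit, pow_add, mul_div_right_comm]
  gcongr
  exact card_walkOf_length_eq_le n z

/-- The constraint on `S` only involves the first `i` steps; the steps from `i` to `j` are free
and must realise a prescribed displacement. -/
lemma card_agree_walkOf_eq_le {m i j : ℕ} (hij : i ≤ j) (hjm : j ≤ m) {S : Finset ℕ}
    (hS : ∀ t ∈ S, t ≤ i) (w : ℕ → ℤ) (z : ℤ) :
    (#{ε : Fin m → Bool | (∀ t ∈ S, walkOf ε t = w t) ∧ walkOf ε j = z} : ℝ)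
      ≤ #{ε : Fin m → Bool | ∀ t ∈ S, walkOf ε t = w t} / √((j - i : ℕ) + 1) := by
  obtain ⟨k, rfl⟩ := Nat.exists_eq_add_of_le (hij.trans hjm)
  have hagree (ε₁ : Fin i → Bool) (ε₂ : Fin k → Bool) :
      (∀ t ∈ S, walkOf (Fin.append ε₁ ε₂) t = w t) ↔ ∀ t ∈ S, walkOf ε₁ t = w t := by
    refine forall₂_congr fun t ht => ?_
    rw [walkOf_append, Nat.sub_eq_zero_of_le (hS t ht), walkOf_zero, add_zero]
  have hend (ε₁ : Fin i → Bool) (ε₂ : Fin k → Bool) :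
      walkOf (Fin.append ε₁ ε₂) j = walkOf ε₁ i + walkOf ε₂ (j - i) := by
    rw [walkOf_append, walkOf_of_length_le _ hij]
  simp only [natCast_card_filter, sum_fin_append, hagree, hend, sum_div]
  refine sum_le_sum fun ε₁ _ => ?_
  by_cases hε₁ : ∀ t ∈ S, walkOf ε₁ t = w t
  · simp only [eq_true hε₁, true_and, if_true, ← natCast_card_filter, add_comm (walkOf ε₁ i),
      ← eq_sub_iff_add_eq]
    rw [sum_const, card_univ, nsmul_eq_mul, mul_one_div, Fintype.card_fun, Fintype.card_fin,
      Fintype.card_bool, Nat.cast_pow, Nat.cast_ofNat]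
    exact card_walkOf_eq_le (by omega) _
  · simp [hε₁]

noncomputable def meetProb (m : ℕ) (S : Finset ℕ) (y : ℤ) : ℝ :=
  (1 / 4 ^ m) * ∑ η : Fin m → Bool,
    if walkOf η m = y then (#{ε : Fin m → Bool | ∀ t ∈ S, walkOf ε t = walkOf η t} : ℝ) else 0

noncomputable def meetEndProb (m : ℕ) (S : Finset ℕ) (x y : ℤ) : ℝ :=
  (1 / 4 ^ m) * ∑ η : Fin m → Bool, if walkOf η m = y then
    (#{ε : Fin m → Bool | (∀ t ∈ S, walkOf ε t = walkOf η t) ∧ walkOf ε m = x} : ℝ) else 0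

lemma meetProb_nonneg (m : ℕ) (S : Finset ℕ) (y : ℤ) : 0 ≤ meetProb m S y := by
  unfold meetProb
  positivity

lemma meetProb_empty (m : ℕ) (y : ℤ) : meetProb m ∅ y = srwProb m y := by
  simp only [meetProb, srwProb, notMem_empty, IsEmpty.forall_iff, implies_true, filter_true,
    card_univ, Fintype.card_fun, Fintype.card_fin, Fintype.card_bool, ← sum_filter, sum_const,
    nsmul_eq_mul]
  rw [show (4 : ℝ) ^ m = 2 ^ m * 2 ^ m by rw [← mul_pow]; norm_num]
  push_cast
  field_simp

lemma meetProb_insert_le {m i j : ℕ} (hij : i ≤ j) (hjm : j ≤ m) {S : Finset ℕ}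
    (hS : ∀ t ∈ S, t ≤ i) (y : ℤ) :
    meetProb m (insert j S) y ≤ (√((j - i : ℕ) + 1))⁻¹ * meetProb m S y := by
  rw [meetProb, meetProb, mul_left_comm, mul_sum (a := (√_)⁻¹)]
  gcongr with η
  split_ifs
  · simp only [forall_mem_insert, and_comm (a := walkOf _ j = _), ← div_eq_inv_mul]
    exact card_agree_walkOf_eq_le hij hjm hS _ _
  · simp

lemma meetEndProb_le {m i : ℕ} (him : i ≤ m) {S : Finset ℕ} (hS : ∀ t ∈ S, t ≤ i) (x y : ℤ) :
    meetEndProb m S x y ≤ (√(m + 1 - i : ℕ))⁻¹ * meetProb m S y := by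
  rw [meetEndProb, meetProb, mul_left_comm, mul_sum (a := (√_)⁻¹),
    show m + 1 - i = m - i + 1 by omega, Nat.cast_succ]
  gcongr with η
  split_ifs
  · rw [← div_eq_inv_mul]
    exact card_agree_walkOf_eq_le him le_rfl hS _ _
  · simp

lemma one_add_pow_collisions (σ : ℝ) {m : ℕ} (ε η : Fin m → Bool) :
    (1 + σ) ^ collisions m ε η = ∑ A ∈ (Icc 1 m).powerset,
      σ ^ #A * if ∀ t ∈ A, walkOf ε t = walkOf η t then 1 else 0 := by
  have hfactor (t : ℕ) : (1 + σ) ^ (if walkOf ε t = walkOf η t then 1 else 0)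
      = 1 + σ * if walkOf ε t = walkOf η t then 1 else 0 := by
    split_ifs <;> simp
  rw [collisions, card_filter, ← prod_pow_eq_pow_sum, prod_congr rfl fun t _ => hfactor t,
    prod_one_add]
  refine sum_congr rfl fun A _ => ?_
  rw [prod_mul_distrib, prod_const, prod_boole]

noncomputable def endpointMoment (σ : ℝ) (m : ℕ) (x y : ℤ) : ℝ :=
  (1 / 4 ^ m) * ∑ ε : Fin m → Bool, ∑ η : Fin m → Bool,
    if walkOf ε m = x ∧ walkOf η m = y then (1 + σ) ^ collisions m ε η else 0

lemma endpointMoment_eq_sum_powerset (σ : ℝ) (m : ℕ) (x y : ℤ) :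
    endpointMoment σ m x y = ∑ A ∈ (Icc 1 m).powerset, σ ^ #A * meetEndProb m A x y := by
  simp only [endpointMoment, meetEndProb, one_add_pow_collisions, natCast_card_filter, mul_sum,
    mul_ite, mul_zero, ite_sum_zero, ← ite_and]
  rw [sum_congr rfl fun _ _ => sum_comm, sum_comm]
  refine sum_congr rfl fun A _ => sum_comm.trans <|
    sum_congr rfl fun η _ => sum_congr rfl fun ε _ => ?_
  exact if_congr (by tauto) (by ring) rfl

lemma sum_powerset_eq_add_sum_max {M : Type*} [AddCommMonoid M] (s : Finset ℕ)
    (F : Finset ℕ → M) :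
    ∑ A ∈ s.powerset, F A = F ∅ + ∑ j ∈ s, ∑ B ∈ {i ∈ s | i < j}.powerset, F (insert j B) := by
  induction s using Finset.induction_on_max with
  | empty => simp
  | insert a s hlt ih =>
    have ha : a ∉ s := fun h => lt_irrefl a (hlt a h)
    rw [sum_powerset_insert ha, ih, sum_insert ha, filter_insert, if_neg (lt_irrefl a),
      filter_true_of_mem hlt, add_assoc, add_comm (∑ j ∈ s, _)]
    congr 2
    refine sum_congr rfl fun j hj => ?_
    rw [filter_insert, if_neg (hlt j hj).not_gt]

lemma forall_mem_insert_le_of_subset_Ico {B : Finset ℕ} {j : ℕ} (hB : B ⊆ Ico 1 j) :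
    ∀ t ∈ insert j B, t ≤ j := by
  simp only [forall_mem_insert, le_rfl, true_and]
  exact fun t ht => (mem_Ico.mp (hB ht)).2.le

/-- The terms of the expansion of `endpointMoment` whose largest meeting time is `j`, without
the endpoint constraint on the first walk. -/
noncomputable def chaosWeight (σ : ℝ) (m : ℕ) (y : ℤ) (j : ℕ) : ℝ :=
  ∑ B ∈ (Ico 1 j).powerset, σ ^ #(insert j B) * meetProb m (insert j B) y

lemma chaosWeight_nonneg {σ : ℝ} (hσ : 0 ≤ σ) (m : ℕ) (y : ℤ) (j : ℕ) :
    0 ≤ chaosWeight σ m y j :=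
  sum_nonneg fun _ _ => mul_nonneg (pow_nonneg hσ _) (meetProb_nonneg _ _ _)

lemma chaosWeight_le {σ : ℝ} (hσ : 0 ≤ σ) {m j : ℕ} (hjm : j ≤ m) (y : ℤ) :
    chaosWeight σ m y j ≤ σ * ((√((j : ℝ) + 1))⁻¹ * srwProb m y
      + ∑ i ∈ Ico 1 j, (√((j - i : ℕ) + 1))⁻¹ * chaosWeight σ m y i) := by
  rw [chaosWeight, sum_powerset_eq_add_sum_max, mul_add, mul_sum]
  refine add_le_add ?_ (sum_le_sum fun i hi => ?_)
  · have := meetProb_insert_le (Nat.zero_le j) hjm (S := ∅) (by simp) y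
    rw [meetProb_empty, Nat.sub_zero] at this
    simpa using mul_le_mul_of_nonneg_left this hσ
  · rw [Ico_filter_lt, min_eq_right (mem_Ico.mp hi).2.le, chaosWeight, mul_sum, mul_sum]
    refine sum_le_sum fun B hB => ?_
    have hB' := forall_mem_insert_le_of_subset_Ico (mem_powerset.mp hB)
    simp only [mem_Ico] at hi
    have hjB : j ∉ insert i B := fun h => by have := hB' j h; omega
    rw [card_insert_of_notMem hjB, pow_succ']
    have := meetProb_insert_le hi.2.le hjm hB' y
    calc σ * σ ^ #(insert i B) * meetProb m (insert j (insert i B)) y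
        ≤ σ * σ ^ #(insert i B) * ((√((j - i : ℕ) + 1))⁻¹ * meetProb m (insert i B) y) := by
          gcongr
      _ = _ := by ring

lemma endpointMoment_le {σ : ℝ} (hσ : 0 ≤ σ) (m : ℕ) (x y : ℤ) :
    endpointMoment σ m x y ≤ (√(m + 1 : ℕ))⁻¹ * srwProb m y
      + ∑ j ∈ Ico 1 (m + 1), (√(m + 1 - j : ℕ))⁻¹ * chaosWeight σ m y j := by
  rw [endpointMoment_eq_sum_powerset, ← Ico_add_one_right_eq_Icc, sum_powerset_eq_add_sum_max]
  refine add_le_add ?_ (sum_le_sum fun j hj => ?_)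
  · simpa [meetProb_empty] using meetEndProb_le (Nat.zero_le m) (S := ∅) (by simp) x y
  · rw [Ico_filter_lt, min_eq_right (mem_Ico.mp hj).2.le, chaosWeight, mul_sum]
    refine sum_le_sum fun B hB => ?_
    have hB' := forall_mem_insert_le_of_subset_Ico (mem_powerset.mp hB)
    simp only [mem_Ico] at hj
    calc σ ^ #(insert j B) * meetEndProb m (insert j B) x y
        ≤ σ ^ #(insert j B) * ((√(m + 1 - j : ℕ))⁻¹ * meetProb m (insert j B) y) := by
          gcongr
          exact meetEndProb_le (by omega) hB' x y
      _ = _ := by ring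

lemma sum_Icc_inv_sqrt_le (n : ℕ) : ∑ t ∈ Icc 1 n, (√t)⁻¹ ≤ 2 * √n := by
  induction n with
  | zero => simp
  | succ n ih =>
    rw [sum_Icc_succ_top (by omega)]
    have hn : (0 : ℝ) ≤ n := n.cast_nonneg
    have hpos : 0 < √((n : ℝ) + 1) := sqrt_pos.mpr (by positivity)
    have hstep : (√((n : ℝ) + 1))⁻¹ ≤ 2 * √((n : ℝ) + 1) - 2 * √n := by
      rw [inv_le_iff_one_le_mul₀' hpos]
      nlinarith [sq_sqrt hn, sq_sqrt (by positivity : (0 : ℝ) ≤ n + 1),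
        sq_nonneg (√((n : ℝ) + 1) - √n)]
    push_cast
    linarith

lemma sum_Icc_exp_neg_le {θ : ℝ} (hθ : 0 < θ) (T : ℕ) :
    ∑ s ∈ Icc 1 T, exp (-θ * s) ≤ θ⁻¹ := by
  have hr : exp (-θ) < 1 := exp_lt_one_iff.mpr (by linarith)
  calc ∑ s ∈ Icc 1 T, exp (-θ * s) = ∑ s ∈ Ico 1 (T + 1), exp (-θ) ^ s := by
        rw [Ico_add_one_right_eq_Icc]
        exact sum_congr rfl fun s _ => by rw [← exp_nat_mul]; ring_nf
    _ ≤ exp (-θ) ^ 1 / (1 - exp (-θ)) := geom_sum_Ico_le_of_lt_one (exp_pos _).le hr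
    _ = (exp θ - 1)⁻¹ := by
        rw [pow_one, exp_neg]
        field_simp [(one_lt_exp_iff.mpr hθ).ne']
    _ ≤ θ⁻¹ := inv_anti₀ hθ (by linarith [add_one_le_exp θ])

lemma sum_Icc_exp_neg_div_sqrt_le {θ : ℝ} (hθ : 0 < θ) (T : ℕ) :
    ∑ s ∈ Icc 1 T, exp (-θ * s) / √s ≤ 3 / √θ := by
  set n := ⌊θ⁻¹⌋₊
  have hn : (n : ℝ) ≤ θ⁻¹ := Nat.floor_le (by positivity)
  have hn' : θ⁻¹ < n + 1 := Nat.lt_floor_add_one _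
  have hsθ : 0 < √θ := sqrt_pos.mpr hθ
  rw [← sum_filter_add_sum_filter_not _ (· ≤ n)]
  have hsmall : ∑ s ∈ Icc 1 T with s ≤ n, exp (-θ * s) / √s ≤ 2 / √θ :=
    calc ∑ s ∈ Icc 1 T with s ≤ n, exp (-θ * s) / √s
        ≤ ∑ s ∈ Icc 1 T with s ≤ n, (√s)⁻¹ := sum_le_sum fun s _ => by
          rw [div_eq_mul_inv, neg_mul]
          exact mul_le_of_le_one_left (by positivity)
            (exp_le_one_iff.mpr (neg_nonpos.mpr (by positivity)))
      _ ≤ ∑ s ∈ Icc 1 n, (√s)⁻¹ :=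
          sum_le_sum_of_subset_of_nonneg (fun s => by simp only [mem_filter, mem_Icc]; omega)
            fun _ _ _ => by positivity
      _ ≤ 2 * √n := sum_Icc_inv_sqrt_le n
      _ ≤ 2 / √θ := by
          rw [div_eq_mul_inv, ← sqrt_inv]
          gcongr
  have hlarge : ∑ s ∈ Icc 1 T with ¬s ≤ n, exp (-θ * s) / √s ≤ 1 / √θ := by
    calc ∑ s ∈ Icc 1 T with ¬s ≤ n, exp (-θ * s) / √s
        ≤ ∑ s ∈ Icc 1 T with ¬s ≤ n, exp (-θ * s) / √((n : ℝ) + 1) := by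
          refine sum_le_sum fun s hs => ?_
          simp only [mem_filter, not_le] at hs
          gcongr
          exact_mod_cast hs.2
      _ ≤ ∑ s ∈ Icc 1 T, exp (-θ * s) / √((n : ℝ) + 1) :=
          sum_le_sum_of_subset_of_nonneg (filter_subset _ _) fun _ _ _ => by positivity
      _ ≤ θ⁻¹ / √((n : ℝ) + 1) := by rw [← sum_div]; gcongr; exact sum_Icc_exp_neg_le hθ T
      _ ≤ 1 / √θ := by
          have hθsq : θ⁻¹ * √θ = (√θ)⁻¹ := by
            nth_rw 1 [← sq_sqrt hθ.le]
            field_simp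
          rw [div_le_div_iff₀ (by positivity) hsθ, one_mul, hθsq, ← sqrt_inv]
          exact sqrt_le_sqrt hn'.le
  linarith [show 3 / √θ = 2 / √θ + 1 / √θ by ring]

lemma inv_sqrt_le_sqrt_two_div_sqrt {a b : ℝ} (ha : 0 < a) (hb : 0 < b) (hab : b ≤ 2 * a) :
    (√a)⁻¹ ≤ √2 / √b := by
  rw [inv_le_iff_one_le_mul₀' (sqrt_pos.mpr ha), mul_div_assoc', le_div_iff₀ (sqrt_pos.mpr hb),
    one_mul, ← sqrt_mul ha.le]
  exact sqrt_le_sqrt (by linarith)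

/-- One of `i`, `j - i` is at least `j / 2`. -/
lemma exp_div_sqrt_mul_sqrt_le {θ : ℝ} (hθ : 0 < θ) {i j : ℕ} (hi : i ∈ Ico 1 j) :
    exp (θ * i) / (√i * √(j - i))
      ≤ √2 / √j * (exp (θ * j / 2) / √i + exp (θ * i) / √(j - i)) := by
  simp only [mem_Ico] at hi
  have hi₁ : (1 : ℝ) ≤ i := by exact_mod_cast hi.1
  have hij : (i : ℝ) + 1 ≤ j := by exact_mod_cast hi.2
  rcases le_or_gt (2 * i) j with h | h
  · have h' : (2 * i : ℝ) ≤ j := by exact_mod_cast h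
    calc exp (θ * i) / (√i * √(j - i)) = exp (θ * i) / √i * (√(j - i))⁻¹ := by
          rw [div_mul_eq_div_div, div_eq_mul_inv]
      _ ≤ exp (θ * j / 2) / √i * (√2 / √j) := by
          gcongr
          · nlinarith
          · exact inv_sqrt_le_sqrt_two_div_sqrt (by linarith) (by linarith) (by linarith)
      _ ≤ √2 / √j * (exp (θ * j / 2) / √i + exp (θ * i) / √(j - i)) := by
          rw [mul_comm]
          gcongr
          exact le_add_of_nonneg_right (by positivity)
  · have h' : (j : ℝ) < 2 * i := by exact_mod_cast h
    calc exp (θ * i) / (√i * √(j - i)) = (√i)⁻¹ * (exp (θ * i) / √(j - i)) := by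
          rw [mul_comm (√_), ← div_div, div_eq_mul_inv, mul_comm]
      _ ≤ √2 / √j * (exp (θ * i) / √(j - i)) := by
          gcongr
          exact inv_sqrt_le_sqrt_two_div_sqrt (by linarith) (by linarith) (by linarith)
      _ ≤ √2 / √j * (exp (θ * j / 2) / √i + exp (θ * i) / √(j - i)) := by
          gcongr
          exact le_add_of_nonneg_left (by positivity)

lemma sum_Ico_exp_div_sqrt_sub_eq (θ : ℝ) (j : ℕ) :
    ∑ i ∈ Ico 1 j, exp (θ * i) / √(j - i) = exp (θ * j) * ∑ s ∈ Ico 1 j, exp (-θ * s) / √s := by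
  have hreflect := sum_Ico_reflect (fun s : ℕ => exp (θ * (j - s)) / √s) 1 (Nat.le_succ j)
  simp only [Nat.add_sub_cancel, Nat.add_sub_cancel_left] at hreflect
  calc ∑ i ∈ Ico 1 j, exp (θ * i) / √(j - i)
      = ∑ i ∈ Ico 1 j, exp (θ * (j - (j - i : ℕ))) / √(j - i : ℕ) :=
        sum_congr rfl fun i hi => by rw [Nat.cast_sub (mem_Ico.mp hi).2.le, sub_sub_cancel]
    _ = ∑ s ∈ Ico 1 j, exp (θ * j) * (exp (-θ * s) / √s) := by
        rw [hreflect]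
        exact sum_congr rfl fun s _ => by rw [mul_div_assoc', ← exp_add]; ring_nf
    _ = exp (θ * j) * ∑ s ∈ Ico 1 j, exp (-θ * s) / √s := (mul_sum _ _ _).symm

lemma sum_Ico_exp_div_sqrt_mul_sqrt_le {θ : ℝ} (hθ : 0 < θ) (j : ℕ) :
    ∑ i ∈ Ico 1 j, exp (θ * i) / (√i * √(j - i)) ≤ 8 * exp (θ * j) / (√θ * √j) := by
  have hsθ : 0 < √θ := sqrt_pos.mpr hθ
  have hinv : ∑ i ∈ Ico 1 j, (√i)⁻¹ ≤ 2 * √j :=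
    (sum_le_sum_of_subset_of_nonneg Ico_subset_Icc_self fun _ _ _ => by positivity).trans
      (sum_Icc_inv_sqrt_le j)
  have htail : ∑ s ∈ Ico 1 j, exp (-θ * s) / √s ≤ 3 / √θ :=
    (sum_le_sum_of_subset_of_nonneg Ico_subset_Icc_self fun _ _ _ => by positivity).trans
      (sum_Icc_exp_neg_div_sqrt_le hθ j)
  have hhalf : exp (θ * j / 2) * √j ≤ exp (θ * j) / √θ := by
    have hexp : θ * j ≤ exp (θ * j / 2) ^ 2 := by
      rw [← exp_nat_mul]; push_cast; ring_nf; linarith [add_one_le_exp (θ * j)]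
    calc exp (θ * j / 2) * √j = exp (θ * j / 2) * √(θ * j) / √θ := by
          rw [sqrt_mul hθ.le]; field_simp
      _ ≤ exp (θ * j / 2) * exp (θ * j / 2) / √θ := by
          gcongr
          exact (sqrt_le_sqrt hexp).trans_eq (sqrt_sq (exp_pos _).le)
      _ = exp (θ * j) / √θ := by rw [← exp_add]; ring_nf
  calc ∑ i ∈ Ico 1 j, exp (θ * i) / (√i * √(j - i))
      ≤ ∑ i ∈ Ico 1 j, √2 / √j * (exp (θ * j / 2) / √i + exp (θ * i) / √(j - i)) :=
        sum_le_sum fun i hi => exp_div_sqrt_mul_sqrt_le hθ hi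
    _ = √2 / √j * (exp (θ * j / 2) * ∑ i ∈ Ico 1 j, (√i)⁻¹
          + exp (θ * j) * ∑ s ∈ Ico 1 j, exp (-θ * s) / √s) := by
        rw [← mul_sum, sum_add_distrib, ← sum_Ico_exp_div_sqrt_sub_eq, mul_sum]
        simp only [div_eq_mul_inv]
    _ ≤ √2 / √j * (exp (θ * j / 2) * (2 * √j) + exp (θ * j) * (3 / √θ)) := by gcongr
    _ ≤ √2 / √j * (2 * (exp (θ * j) / √θ) + exp (θ * j) * (3 / √θ)) := by
        gcongr √2 / √j * (?_ + _)
        linarith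
    _ = 5 * √2 * exp (θ * j) / (√θ * √j) := by ring
    _ ≤ 8 * exp (θ * j) / (√θ * √j) := by
        gcongr
        nlinarith [sq_sqrt (zero_le_two (α := ℝ)), sqrt_nonneg 2]

/-- `θ = (16 c σ)²` is chosen so that `2 c σ · 8 / √θ = 1`. -/
lemma renewal_step {c σ e : ℝ} {a f : ℕ → ℝ} {j : ℕ} (hc : 0 < c) (hσ : 0 < σ) (he : 0 ≤ e)
    (ha : ∀ n, 1 ≤ n → a n ≤ c / √n) (hj : 1 ≤ j)
    (hf : ∀ i ∈ Ico 1 j, 0 ≤ f i ∧ f i ≤ 2 * c * σ * exp ((16 * c * σ) ^ 2 * i) / √i * e) :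
    a j * e + ∑ i ∈ Ico 1 j, a (j - i) * f i ≤ 2 * c * exp ((16 * c * σ) ^ 2 * j) / √j * e := by
  set θ := (16 * c * σ) ^ 2
  have hsθ : √θ = 16 * c * σ := sqrt_sq (by positivity)
  have hexp : 1 ≤ exp (θ * j) := one_le_exp (by positivity)
  calc a j * e + ∑ i ∈ Ico 1 j, a (j - i) * f i
      ≤ c / √j * e + ∑ i ∈ Ico 1 j, c / √(j - i : ℕ) * (2 * c * σ * exp (θ * i) / √i * e) := by
        gcongr with i hi
        · exact ha j hj
        · exact (hf i hi).1
        · exact ha _ (by have := mem_Ico.mp hi; omega)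
        · exact (hf i hi).2
    _ = c * e * (1 / √j + 2 * c * σ * ∑ i ∈ Ico 1 j, exp (θ * i) / (√i * √(j - i))) := by
        rw [mul_sum, mul_add, mul_sum]
        congr 1
        · ring
        · refine sum_congr rfl fun i hi => ?_
          rw [Nat.cast_sub (mem_Ico.mp hi).2.le]
          ring
    _ ≤ c * e * (1 / √j + 2 * c * σ * (8 * exp (θ * j) / (√θ * √j))) := by
        gcongr
        exact sum_Ico_exp_div_sqrt_mul_sqrt_le (by positivity) j
    _ = c * e / √j * (1 + exp (θ * j)) := by
        rw [hsθ]
        field_simp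
        ring
    _ ≤ 2 * c * exp (θ * j) / √j * e := by
        rw [show 2 * c * exp (θ * j) / √j * e = c * e / √j * (exp (θ * j) + exp (θ * j)) by ring]
        gcongr

lemma renewal_le {c σ e : ℝ} {a f : ℕ → ℝ} {m : ℕ} (hc : 0 < c) (hσ : 0 < σ) (he : 0 ≤ e)
    (ha : ∀ n, 1 ≤ n → a n ≤ c / √n) (hf₀ : ∀ n, 0 ≤ f n)
    (hrec : ∀ j, 1 ≤ j → j ≤ m → f j ≤ σ * (a j * e + ∑ i ∈ Ico 1 j, a (j - i) * f i))
    {j : ℕ} (hj : 1 ≤ j) (hjm : j ≤ m) :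
    f j ≤ 2 * c * σ * exp ((16 * c * σ) ^ 2 * j) / √j * e := by
  induction j using Nat.strong_induction_on with
  | _ j ih =>
    calc f j ≤ σ * (a j * e + ∑ i ∈ Ico 1 j, a (j - i) * f i) := hrec j hj hjm
      _ ≤ σ * (2 * c * exp ((16 * c * σ) ^ 2 * j) / √j * e) := by
          gcongr
          refine renewal_step hc hσ he ha hj fun i hi => ⟨hf₀ i, ?_⟩
          simp only [mem_Ico] at hi
          exact ih i hi.2 hi.1 (by omega)
      _ = 2 * c * σ * exp ((16 * c * σ) ^ 2 * j) / √j * e := by ring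

lemma srwProb_nonneg (m : ℕ) (x : ℤ) : 0 ≤ srwProb m x := by
  unfold srwProb
  positivity

lemma endpointMoment_le_srwProb {σ : ℝ} (hσ : 0 < σ) (m : ℕ) (x y : ℤ) :
    endpointMoment σ m x y ≤ 2 * exp ((16 * σ) ^ 2 * (m + 1)) / √(m + 1) * srwProb m y := by
  have hchaos (j : ℕ) (hj : j ∈ Ico 1 (m + 1)) : 0 ≤ chaosWeight σ m y j ∧
      chaosWeight σ m y j ≤ 2 * 1 * σ * exp ((16 * 1 * σ) ^ 2 * j) / √j * srwProb m y := by
    refine ⟨chaosWeight_nonneg hσ.le m y j, renewal_le (a := fun n => (√((n : ℝ) + 1))⁻¹)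
      one_pos hσ (srwProb_nonneg m y) (fun n hn => ?_) (chaosWeight_nonneg hσ.le m y)
      (fun j _ hjm => chaosWeight_le hσ.le hjm y) (mem_Ico.mp hj).1
      (Nat.lt_succ_iff.mp (mem_Ico.mp hj).2)⟩
    rw [one_div]
    exact inv_anti₀ (sqrt_pos.mpr (by exact_mod_cast hn)) (sqrt_le_sqrt (by linarith))
  -- the endpoint constraint on the first walk is one more renewal step, at time `m + 1`
  have hend := renewal_step (a := fun n => (√(n : ℝ))⁻¹) one_pos hσ (srwProb_nonneg m y)
    (fun n _ => (one_div _).ge) (by omega : 1 ≤ m + 1) hchaos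
  have := (endpointMoment_le hσ.le m x y).trans hend
  push_cast at this
  simpa using this

lemma collisions_comm {m : ℕ} (ε η : Fin m → Bool) : collisions m ε η = collisions m η ε := by
  simp only [collisions, eq_comm]

lemma endpointMoment_comm (σ : ℝ) (m : ℕ) (x y : ℤ) :
    endpointMoment σ m x y = endpointMoment σ m y x := by
  rw [endpointMoment, endpointMoment, sum_comm]
  simp only [collisions_comm, and_comm]

lemma endpoint_prefactor_le (β : ℝ) {K : ℝ} (hK : 0 < K) {N : ℕ} (hN : 1 ≤ N) :
    2 * exp ((16 * (β ^ 2 * (N : ℝ) ^ (-(1 / 2) : ℝ))) ^ 2 * (⌊K * N⌋₊ + 1)) / √(⌊K * N⌋₊ + 1)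
      ≤ 2 * exp (256 * β ^ 4 * (K + 1)) * (K * N) ^ (-(1 / 2) : ℝ) := by
  have hN' : (1 : ℝ) ≤ N := by exact_mod_cast hN
  have hKN : 0 < K * N := by positivity
  have hfloor : K * N < ⌊K * N⌋₊ + 1 := Nat.lt_floor_add_one _
  have hfloor' : (⌊K * N⌋₊ : ℝ) ≤ K * N := Nat.floor_le hKN.le
  have hsq : (16 * (β ^ 2 * (N : ℝ) ^ (-(1 / 2) : ℝ))) ^ 2 = 256 * β ^ 4 / N := by
    rw [mul_pow, mul_pow, ← rpow_natCast ((N : ℝ) ^ _), ← rpow_mul (by positivity)]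
    norm_num [rpow_neg_one]
    ring
  have hexp : 256 * β ^ 4 / N * (⌊K * N⌋₊ + 1) ≤ 256 * β ^ 4 * (K + 1) := by
    have h := mul_le_mul_of_nonneg_left (show (⌊K * N⌋₊ : ℝ) + 1 ≤ (K + 1) * N by nlinarith)
      (by positivity : (0 : ℝ) ≤ 256 * β ^ 4)
    rw [div_mul_eq_mul_div, div_le_iff₀ (by positivity)]
    linarith
  rw [div_eq_mul_inv, rpow_neg hKN.le, ← sqrt_eq_rpow, hsq]
  gcongr 2 * exp ?_ * (√?_)⁻¹

/-- Endpoint-restricted exponential collision moment bound for two independent simple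
random walks on ℤ started at 0:
E[(1+β²N^{-1/2})^{#collisions ≤ ⌊KN⌋}; Y¹_{⌊KN⌋}=x, Y²_{⌊KN⌋}=y]
  ≤ C (KN)^{-1/2} min(P(Y_{⌊KN⌋}=x), P(Y_{⌊KN⌋}=y)). -/
theorem collision_exponential_moment_endpoint (β K : ℝ) (hβ : 0 < β) (hK : 0 < K) :
    ∃ C : ℝ, ∀ N : ℕ, 1 ≤ N → ∀ x y : ℤ,
      (1 / (4 : ℝ) ^ (⌊K * (N : ℝ)⌋₊)) *
        ∑ ε : Fin ⌊K * (N : ℝ)⌋₊ → Bool, ∑ η : Fin ⌊K * (N : ℝ)⌋₊ → Bool,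
          (if walkOf ε (⌊K * (N : ℝ)⌋₊) = x ∧ walkOf η (⌊K * (N : ℝ)⌋₊) = y then
            (1 + β ^ 2 * (N : ℝ) ^ (-(1/2) : ℝ)) ^ collisions (⌊K * (N : ℝ)⌋₊) ε η
          else 0)
      ≤ C * (K * (N : ℝ)) ^ (-(1/2) : ℝ) *
          min (srwProb (⌊K * (N : ℝ)⌋₊) x) (srwProb (⌊K * (N : ℝ)⌋₊) y) := by
  refine ⟨2 * exp (256 * β ^ 4 * (K + 1)), fun N hN x y => ?_⟩
  set σ := β ^ 2 * (N : ℝ) ^ (-(1 / 2) : ℝ)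
  set m := ⌊K * (N : ℝ)⌋₊
  have hσ : 0 < σ := mul_pos (by positivity) (rpow_pos_of_pos (by exact_mod_cast hN) _)
  change endpointMoment σ m x y ≤ _
  have hx := endpointMoment_le_srwProb hσ m y x
  have hy := endpointMoment_le_srwProb hσ m x y
  rw [endpointMoment_comm] at hx
  calc endpointMoment σ m x y
      ≤ 2 * exp ((16 * σ) ^ 2 * (m + 1)) / √(m + 1) * min (srwProb m x) (srwProb m y) := by
        rcases min_choice (srwProb m x) (srwProb m y) with h | h <;> rw [h] <;> assumption
    _ ≤ _ := by
        gcongr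
        · exact le_min (srwProb_nonneg m x) (srwProb_nonneg m y)
        · exact endpoint_prefactor_le β hK hN
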